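/- Let 𝔤 be an n-dimensional real nilpotent Lie algebra with a nice basis, structure constants c_I, and root matrix M_Δ. If the mod-2 root matrix M_{Δ,2} is surjective as a linear map (ℤ/2)ⁿ → (ℤ/2)^{I_Δ}, and there exists a vector X = (x_I) ∈ ℝ^{I_Δ} with M_Δᵀ X = (1,…,1) and x_I ≠ 0 for every I ∈ I_Δ, then 𝔤 admits a diagonal metric satisfying condition (E) (ric = ½ id). -/

import Mathlib

open scoped BigOperators

/-- The bilinear bracket on `Fin n → ℝ` determined by structure constants `c`. -/
def bracket {n : ℕ} (c : Fin n → Fin n → Fin n → ℝ) (x y : Fin n → ℝ) : Fin n → ℝ :=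
  fun k => ∑ i, ∑ j, x i * y j * c i j k

/-- `c` is the family of structure constants of a nilpotent Lie algebra for which
the standard basis of `Fin n → ℝ` is a nice basis. -/
structure IsNiceNilpotent {n : ℕ} (c : Fin n → Fin n → Fin n → ℝ) : Prop where
  skew : ∀ i j k, c i j k = - c j i k
  jacobi : ∀ x y z : Fin n → ℝ,
    bracket c (bracket c x y) z + bracket c (bracket c y z) x + bracket c (bracket c z x) y = 0
  nilpotent : ∃ N : ℕ, ∀ (v : Fin N → Fin n → ℝ) (w : Fin n → ℝ),
    (List.ofFn v).foldr (bracket c) w = 0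
  nice_k : ∀ i j k k', c i j k ≠ 0 → c i j k' ≠ 0 → k = k'
  nice_j : ∀ i j j' k, c i j k ≠ 0 → c i j' k ≠ 0 → j = j'

/-- Entry `h` of the row of the root matrix indexed by a bracket `[e i, e j] = c i j k • e k`:
the row vector `- eⁱ - eʲ + eᵏ`. -/
def rootRow {n : ℕ} (i j k h : Fin n) : ℤ :=
  (if k = h then 1 else 0) - (if i = h then 1 else 0) - (if j = h then 1 else 0)

/-- The mod 2 reduction of the root matrix entries. -/
def rootRow2 {n : ℕ} (i j k h : Fin n) : ZMod 2 := ((rootRow i j k h : ℤ) : ZMod 2)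

/-- The Ricci operator of the scalar product with matrix `g` in the nice basis,
`ric_h^k = ¼ g^{im} g^{lp} g_{hq} c_{ilk} c_{mpq} − ½ g^{km} g^{jp} g_{iq} c_{hji} c_{mpq}`. -/
noncomputable def Ric {n : ℕ} (c : Fin n → Fin n → Fin n → ℝ)
    (g : Matrix (Fin n) (Fin n) ℝ) : Matrix (Fin n) (Fin n) ℝ :=
  Matrix.of fun h k =>
    (1/4 : ℝ) * (∑ i, ∑ m, ∑ l, ∑ p, ∑ q,
        g⁻¹ i m * g⁻¹ l p * g h q * c i l k * c m p q)
    - (1/2 : ℝ) * (∑ m, ∑ j, ∑ p, ∑ i, ∑ q,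
        g⁻¹ k m * g⁻¹ j p * g i q * c h j i * c m p q)

/-- Condition (E): the Ricci operator equals `½ id`. -/
def EinsteinE {n : ℕ} (c : Fin n → Fin n → Fin n → ℝ)
    (g : Matrix (Fin n) (Fin n) ℝ) : Prop :=
  Ric c g = (1/2 : ℝ) • (1 : Matrix (Fin n) (Fin n) ℝ)

/-- The matrix of the `σ`-diagonal bilinear form `∑ᵢ gᵢ eⁱ ⊗ e^{σ i}`. -/
def sigmaDiag {n : ℕ} (σ : Equiv.Perm (Fin n)) (gv : Fin n → ℝ) :
    Matrix (Fin n) (Fin n) ℝ :=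
  Matrix.of fun i j => if σ i = j then gv i else 0

/-- `σ` is a diagram involution: it squares to the identity and preserves the
set of nonzero structure constants. -/
def IsDiagramInvolution {n : ℕ} (c : Fin n → Fin n → Fin n → ℝ)
    (σ : Equiv.Perm (Fin n)) : Prop :=
  (∀ i, σ (σ i) = i) ∧ ∀ i j k, c i j k ≠ 0 → c (σ i) (σ j) (σ k) ≠ 0

/-- The mod 2 root matrix `M_{Δ,2}` is surjective: every vector indexed by the brackets
`I_Δ` is of the form `M_{Δ,2} s`. -/
def SurjectiveType {n : ℕ} (c : Fin n → Fin n → Fin n → ℝ) : Prop :=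
  ∀ y : Fin n → Fin n → Fin n → ZMod 2, ∃ s : Fin n → ZMod 2,
    ∀ i j k, i < j → c i j k ≠ 0 → y i j k = ∑ h, rootRow2 i j k h * s h

/-!
For a diagonal metric `g = diag(g₁, …, gₙ)` the Ricci operator of a nice basis is diagonal, and if
every bracket satisfies `c_{ijk}² g_k = x_{ijk} g_i g_j` then `ric_h^h = ½ (M_Δᵀ X)_h`, so (K) gives
(E). These conditions form the multiplicative system `g_k / (g_i g_j) = x_I / c_I²` with matrix
`M_Δ`: the signs of the `g_h` are solved modulo 2 by surjectivity of `M_{Δ,2}`, and the logarithms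
of their absolute values over `ℝ`, because a right inverse `B` of `M_Δ` modulo 2 makes
`det (M_Δ B)` odd, hence nonzero, so `M_Δ` is surjective over `ℝ` as well.
-/

open Finset

theorem Matrix.mulVec_surjective_map_intCast_of_zmod {T m : Type*} [Fintype T] [DecidableEq T]
    [Fintype m] {p : ℕ} [Fact (1 < p)] (K : Type*) [Field K] [CharZero K] (A : Matrix T m ℤ)
    (hA : Function.Surjective (A.map (Int.cast : ℤ → ZMod p)).mulVec) :
    Function.Surjective (A.map (Int.cast : ℤ → K)).mulVec := by
  obtain ⟨B, hB⟩ := Matrix.mulVec_surjective_iff_exists_right_inverse.1 hA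
  set B' : Matrix m T ℤ := B.map fun x => (x.cast : ℤ)
  have hmod : (A * B').map (Int.cast : ℤ → ZMod p) = 1 := by
    rw [← hB]
    ext i j
    simp [Matrix.mul_apply, B']
  have hdet : (A * B').det ≠ 0 := fun h0 => by
    simpa [hmod, h0] using Int.cast_det (R := ZMod p) (A * B')
  set AB : Matrix T T K := A.map Int.cast * B'.map Int.cast
  have hdetK : IsUnit AB.det := by
    rw [show AB = (A * B').map Int.cast from (Matrix.map_mul (f := Int.castRingHom K)).symm,
      ← Int.cast_det]
    exact isUnit_iff_ne_zero.2 (by exact_mod_cast hdet)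
  refine Matrix.mulVec_surjective_iff_exists_right_inverse.2
    ⟨(B'.map (Int.cast : ℤ → K) * AB⁻¹ : Matrix m T K), ?_⟩
  rw [← Matrix.mul_assoc]
  exact Matrix.mul_nonsing_inv _ hdetK

lemma neg_one_pow_val_add {R : Type*} [Ring R] (a b : ZMod 2) :
    (-1 : R) ^ (a + b).val = (-1) ^ a.val * (-1) ^ b.val := by
  rw [ZMod.val_add, ← neg_one_pow_eq_pow_mod_two, pow_add]

lemma sum_rootRow_mul {R : Type*} [CommRing R] {n : ℕ} (u : Fin n → R) (i j k : Fin n) :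
    ∑ h, (rootRow i j k h : R) * u h = u k - u i - u j := by
  simp [rootRow, sub_mul, ite_mul, sum_sub_distrib]

lemma sum_rootRow2_mul {n : ℕ} (s : Fin n → ZMod 2) (i j k : Fin n) :
    ∑ h, rootRow2 i j k h * s h = s i + s j + s k := by
  rw [show ∑ h, rootRow2 i j k h * s h = ∑ h, (rootRow i j k h : ZMod 2) * s h from rfl,
    sum_rootRow_mul, CharTwo.sub_eq_add, CharTwo.sub_eq_add]
  ring

lemma sum_mul_rootRow {R : Type*} [CommRing R] {n : ℕ} (X : Fin n → Fin n → Fin n → R)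
    (h : Fin n) :
    ∑ i, ∑ j, ∑ k, X i j k * (rootRow i j k h : R) =
      ∑ i, ∑ j, X i j h - ∑ j, ∑ k, X h j k - ∑ i, ∑ k, X i h k := by
  simp [rootRow, mul_sub, mul_ite, sum_sub_distrib]

namespace SurjectiveType

variable {n : ℕ} {c : Fin n → Fin n → Fin n → ℝ}

lemma exists_sub_sub_eq (hsurj : SurjectiveType c) (b : Fin n → Fin n → Fin n → ℝ) :
    ∃ u : Fin n → ℝ, ∀ i j k, i < j → c i j k ≠ 0 → u k - u i - u j = b i j k := by
  classical
  let A : Matrix {p : Fin n × Fin n × Fin n // p.1 < p.2.1 ∧ c p.1 p.2.1 p.2.2 ≠ 0} (Fin n) ℤ :=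
    fun I => rootRow I.1.1 I.1.2.1 I.1.2.2
  have hA : Function.Surjective (A.map (Int.cast : ℤ → ZMod 2)).mulVec := by
    intro y
    obtain ⟨s, hs⟩ := hsurj fun i j k => if h : i < j ∧ c i j k ≠ 0 then y ⟨(i, j, k), h⟩ else 0
    refine ⟨s, funext fun ⟨(i, j, k), hI⟩ => ?_⟩
    have hsI := hs i j k hI.1 hI.2
    rw [dif_pos hI] at hsI
    exact hsI.symm
  obtain ⟨u, hu⟩ := A.mulVec_surjective_map_intCast_of_zmod ℝ hA fun I => b I.1.1 I.1.2.1 I.1.2.2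
  refine ⟨u, fun i j k hij hc => ?_⟩
  rw [← sum_rootRow_mul]
  exact congrFun hu ⟨(i, j, k), hij, hc⟩

lemma exists_ne_zero_mul_eq (hsurj : SurjectiveType c) (Y : Fin n → Fin n → Fin n → ℝ)
    (hY : ∀ i j k, i < j → c i j k ≠ 0 → Y i j k ≠ 0) :
    ∃ g : Fin n → ℝ, (∀ h, g h ≠ 0) ∧
      ∀ i j k, i < j → c i j k ≠ 0 → g k = Y i j k * (g i * g j) := by
  obtain ⟨s, hs⟩ := hsurj fun i j k => if Y i j k < 0 then 1 else 0
  obtain ⟨u, hu⟩ := hsurj.exists_sub_sub_eq fun i j k => Real.log |Y i j k|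
  set ε : Fin n → ℝ := fun h => (-1) ^ (s h).val
  have hε : ∀ h, ε h * ε h = 1 := fun h => by simp [ε, ← mul_pow]
  refine ⟨fun h => ε h * Real.exp (u h), fun h => ?_, fun i j k hij hc => ?_⟩
  · exact mul_ne_zero (pow_ne_zero _ (by norm_num)) (Real.exp_ne_zero _)
  have hsign : ε i * ε j * ε k * |Y i j k| = Y i j k := by
    simp only [ε]
    rw [← neg_one_pow_val_add, ← neg_one_pow_val_add, ← sum_rootRow2_mul, ← hs i j k hij hc]
    split_ifs with hneg
    · simp [abs_of_neg hneg, ZMod.val_one]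
    · simp [abs_of_nonneg (not_lt.1 hneg)]
  have hexp : Real.exp (u k) = |Y i j k| * (Real.exp (u i) * Real.exp (u j)) := by
    rw [← Real.exp_log (abs_pos.2 (hY i j k hij hc)), ← hu i j k hij hc, ← Real.exp_add,
      ← Real.exp_add]
    ring_nf
  beta_reduce
  rw [← hsign, hexp]
  linear_combination (-(ε k * |Y i j k| * Real.exp (u i) * Real.exp (u j) * ε j * ε j)) * hε i
    - ε k * |Y i j k| * Real.exp (u i) * Real.exp (u j) * hε j

end SurjectiveType

section Ricci

variable {n : ℕ} (c : Fin n → Fin n → Fin n → ℝ) {gv : Fin n → ℝ}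

lemma Ric_diagonal_apply (hgv : ∀ i, gv i ≠ 0) (h k : Fin n) :
    Ric c (Matrix.diagonal gv) h k =
      1 / 4 * ∑ i, ∑ l, (gv i)⁻¹ * (gv l)⁻¹ * gv h * c i l k * c i l h
      - 1 / 2 * ∑ j, ∑ i, (gv k)⁻¹ * (gv j)⁻¹ * gv i * c h j i * c k j i := by
  have hinv : (Matrix.diagonal gv)⁻¹ = Matrix.diagonal fun i => (gv i)⁻¹ :=
    Matrix.inv_eq_right_inv (by simp [Matrix.diagonal_mul_diagonal, hgv])
  simp only [Ric, Matrix.of_apply, hinv, Matrix.diagonal_apply, ite_mul, mul_ite, zero_mul,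
    mul_zero, sum_ite_irrel, sum_ite_eq, sum_const_zero, mem_univ, if_true]

lemma Ric_diagonal_apply_of_ne (hskew : ∀ i j k, c i j k = -c j i k)
    (hk : ∀ i j k k', c i j k ≠ 0 → c i j k' ≠ 0 → k = k')
    (hj : ∀ i j j' k, c i j k ≠ 0 → c i j' k ≠ 0 → j = j')
    (hgv : ∀ i, gv i ≠ 0) {h k : Fin n} (hhk : h ≠ k) :
    Ric c (Matrix.diagonal gv) h k = 0 := by
  have hout : ∀ i l, c i l k * c i l h = 0 := fun i l => by
    by_contra hne
    obtain ⟨hlk, hlh⟩ := mul_ne_zero_iff.1 hne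
    exact hhk (hk i l h k hlh hlk)
  have hin : ∀ j i, c h j i * c k j i = 0 := fun j i => by
    by_contra hne
    rw [hskew h, hskew k, neg_mul_neg] at hne
    obtain ⟨hjh, hjk⟩ := mul_ne_zero_iff.1 hne
    exact hhk (hj j h k i hjh hjk)
  simp [Ric_diagonal_apply c hgv, mul_assoc, hout, hin]

lemma Ric_diagonal_apply_self (X : Fin n → Fin n → Fin n → ℝ) (hgv : ∀ i, gv i ≠ 0)
    (hX : ∀ i j k, c i j k ^ 2 * gv k = (X i j k + X j i k) * (gv i * gv j)) (h : Fin n) :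
    Ric c (Matrix.diagonal gv) h h = 1 / 2 * ∑ i, ∑ j, ∑ k, X i j k * (rootRow i j k h : ℝ) := by
  have hterm : ∀ i j k, (gv i)⁻¹ * (gv j)⁻¹ * gv k * c i j k * c i j k = X i j k + X j i k :=
    fun i j k => by
      field_simp [hgv i, hgv j]
      linear_combination hX i j k
  simp only [Ric_diagonal_apply c hgv, hterm, sum_mul_rootRow, sum_add_distrib]
  rw [sum_comm (f := fun i l => X l i h)]
  ring

end Ricci

lemma sq_mul_eq_add_mul_mul {n : ℕ} {c X : Fin n → Fin n → Fin n → ℝ} {gv : Fin n → ℝ}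
    (hskew : ∀ i j k, c i j k = -c j i k)
    (hsupp : ∀ i j k, ¬(i < j ∧ c i j k ≠ 0) → X i j k = 0)
    (hbr : ∀ i j k, i < j → c i j k ≠ 0 → c i j k ^ 2 * gv k = X i j k * (gv i * gv j))
    (i j k : Fin n) :
    c i j k ^ 2 * gv k = (X i j k + X j i k) * (gv i * gv j) := by
  have hlt : ∀ i j, i < j → c i j k ^ 2 * gv k = (X i j k + X j i k) * (gv i * gv j) := by
    intro i j hij
    rw [hsupp j i k fun h => h.1.not_gt hij, add_zero]
    by_cases hc : c i j k = 0
    · simp [hc, hsupp i j k fun h => h.2 hc]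
    · exact hbr i j k hij hc
  rcases lt_trichotomy i j with hij | rfl | hji
  · exact hlt i j hij
  · have hc : c i i k = 0 := by linarith [hskew i i k]
    simp [hc, hsupp i i k fun h => lt_irrefl i h.1]
  · rw [hskew i j k, neg_sq, add_comm, mul_comm (gv i)]
    exact hlt j i hji

/-- Sufficient condition: if the mod 2 root matrix is surjective and `X` satisfies
(K) `M_Δᵀ X = (1,…,1)` with all `x_I ≠ 0` (`I ∈ I_Δ`), then the nice nilpotent Lie
algebra admits a diagonal metric satisfying (E) `ric = ½ id`. -/
theorem diagonal_einstein_of_surjective_type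
    (n : ℕ) (c : Fin n → Fin n → Fin n → ℝ) (hc : IsNiceNilpotent c)
    (hsurj : SurjectiveType c)
    (X : Fin n → Fin n → Fin n → ℝ)
    (hsupp : ∀ i j k : Fin n, ¬(i < j ∧ c i j k ≠ 0) → X i j k = 0)
    (hK : ∀ h : Fin n, (∑ i, ∑ j, ∑ k, X i j k * ((rootRow i j k h : ℤ) : ℝ)) = 1)
    (hH : ∀ i j k : Fin n, i < j → c i j k ≠ 0 → X i j k ≠ 0) :
    ∃ gv : Fin n → ℝ, (∀ i, gv i ≠ 0) ∧ EinsteinE c (Matrix.diagonal gv) := by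
  obtain ⟨gv, hgv, hbr⟩ := hsurj.exists_ne_zero_mul_eq (fun i j k => X i j k / c i j k ^ 2)
    fun i j k hij hcijk => div_ne_zero (hH i j k hij hcijk) (pow_ne_zero 2 hcijk)
  have hX := sq_mul_eq_add_mul_mul (gv := gv) hc.skew hsupp fun i j k hij hcijk => by
    rw [hbr i j k hij hcijk]
    field_simp
  refine ⟨gv, hgv, Matrix.ext fun h k => ?_⟩
  rcases eq_or_ne h k with rfl | hhk
  · simp [Ric_diagonal_apply_self c X hgv hX, hK]
  · simp [Ric_diagonal_apply_of_ne c hc.skew hc.nice_k hc.nice_j hgv hhk, hhk]
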